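/- arXiv:1907.11012 — 3 statements merged into one kernel-verified Lean document; each statement's English description precedes it below -/
import Mathlib

section
/- For every ε > 0, there exist δ' = δ'(ε) > 0 and n₀ = n₀(ε) ∈ ℕ such that ‖λ^{−n} B^{(n)}(y) − P‖₂ < ε holds for all integers n ≥ n₀ and all y ∈ ℝ^m with ‖y‖₂ < δ', where P = |v⟩⟨u| is the rank-one Perron projector of M. -/
/-!
Dividing `M` by `λ` and conjugating it by the diagonal matrix of its right Perron vector `v`
gives a stochastic matrix `S` with stationary distribution `u v`. Some power of `S` has all
entries at least `δ > 0`, so by Doeblin's argument that power shrinks the oscillation of every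
column by the factor `1 - δ`. Hence `Sⁿ` converges to the matrix whose rows all equal `u v`,
that is, `λ⁻ⁿ Mⁿ → |v⟩⟨u|`.

For the cocycle, `|B(y)| ≤ M` entrywise and `|B(y) - M| = O(‖y‖)`. Writing
`B⁽ⁿ⁺¹⁾(y) - Mⁿ⁺¹ = B(y) (B⁽ⁿ⁾(Ry) - Mⁿ) + (B(y) - M) Mⁿ` and using `‖R‖ < 1`, induction
gives `|B⁽ⁿ⁾(y) - Mⁿ| ≤ D λⁿ ‖y‖`. So `λ⁻ⁿ B⁽ⁿ⁾(y) → P` as `n → ∞` and `y → 0` together, and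
the operator norm is continuous on matrices.
-/

open Filter Finset Matrix Topology

section Fourier

variable {E : Type*} [NormedAddCommGroup E] [InnerProductSpace ℝ E]

lemma two_pi_I_mul_eq (t : ℝ) :
    2 * Real.pi * Complex.I * (t : ℂ) = Complex.I * ((2 * Real.pi * t : ℝ) : ℂ) := by
  push_cast
  ring

lemma norm_sum_exp_inner_le (s : Finset E) (y : E) :
    ‖∑ x ∈ s, Complex.exp (2 * Real.pi * Complex.I * ((inner ℝ x y : ℝ) : ℂ))‖ ≤ s.card := by
  refine (norm_sum_le _ _).trans_eq ?_
  simp only [two_pi_I_mul_eq, Complex.norm_exp_I_mul_ofReal, sum_const, nsmul_eq_mul, mul_one]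

lemma norm_sum_exp_inner_sub_card_le (s : Finset E) (y : E) :
    ‖∑ x ∈ s, Complex.exp (2 * Real.pi * Complex.I * ((inner ℝ x y : ℝ) : ℂ)) - s.card‖ ≤
      (2 * Real.pi * ∑ x ∈ s, ‖x‖) * ‖y‖ := by
  rw [card_eq_sum_ones, Nat.cast_sum, Nat.cast_one, ← sum_sub_distrib, mul_sum, sum_mul]
  refine (norm_sum_le _ _).trans (sum_le_sum fun x _ => ?_)
  rw [two_pi_I_mul_eq]
  refine Real.norm_exp_I_mul_ofReal_sub_one_le.trans ?_
  rw [Real.norm_eq_abs, abs_mul, abs_of_pos Real.two_pi_pos, mul_assoc (2 * Real.pi)]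
  exact mul_le_mul_of_nonneg_left (abs_real_inner_le_norm x y) Real.two_pi_pos.le

end Fourier

namespace Matrix

variable {ι : Type*} [Fintype ι]

lemma abs_sub_dotProduct_le {π f : ι → ℝ} {a c : ℝ} (hπ : ∀ i, 0 ≤ π i) (hπ1 : ∑ i, π i = 1)
    (hf : ∀ j, f j ∈ Set.Icc a (a + c)) (i : ι) : |f i - π ⬝ᵥ f| ≤ c := by
  have hlow : a ≤ π ⬝ᵥ f := by
    calc a = ∑ j, π j * a := by rw [← sum_mul, hπ1, one_mul]
      _ ≤ π ⬝ᵥ f := sum_le_sum fun j _ => mul_le_mul_of_nonneg_left (hf j).1 (hπ j)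
  have hup : π ⬝ᵥ f ≤ a + c := by
    calc π ⬝ᵥ f ≤ ∑ j, π j * (a + c) :=
          sum_le_sum fun j _ => mul_le_mul_of_nonneg_left (hf j).2 (hπ j)
      _ = a + c := by rw [← sum_mul, hπ1, one_mul]
  rw [abs_sub_le_iff]
  constructor <;> linarith [(hf i).1, (hf i).2]

lemma norm_mul_apply_sub_le (A A' : Matrix ι ι ℂ) (X X' : Matrix ι ι ℝ) (i j : ι) :
    ‖(A * A') i j - (X * X') i j‖ ≤
      ∑ k, (‖A i k‖ * ‖A' k j - X' k j‖ + ‖A i k - X i k‖ * |X' k j|) := by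
  have hsplit : (A * A') i j - ((X * X') i j : ℂ) =
      ∑ k, (A i k * (A' k j - X' k j) + (A i k - X i k) * X' k j) := by
    simp only [mul_apply, Complex.ofReal_sum, Complex.ofReal_mul, ← sum_sub_distrib]
    exact sum_congr rfl fun k _ => by ring
  rw [hsplit]
  refine (norm_sum_le _ _).trans (sum_le_sum fun k _ => ?_)
  refine (norm_add_le _ _).trans_eq ?_
  rw [norm_mul, norm_mul, Complex.norm_real, Real.norm_eq_abs]

variable [DecidableEq ι]

section Doeblin

variable {A : Matrix ι ι ℝ} {δ a c : ℝ} {f : ι → ℝ}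

lemma mulVec_const_of_mem_rowStochastic (hA : A ∈ rowStochastic ℝ ι) (a : ℝ) :
    A *ᵥ (fun _ => a) = fun _ => a := by
  ext i
  simp [mulVec, dotProduct, ← sum_mul, sum_row_of_mem_rowStochastic hA i]

lemma mul_le_mulVec_apply (hA : A ∈ rowStochastic ℝ ι) (hδ : ∀ i j, δ ≤ A i j) {g : ι → ℝ}
    (hg : ∀ j, 0 ≤ g j) (i j : ι) : δ * g j ≤ (A *ᵥ g) i :=
  calc δ * g j ≤ A i j * g j := mul_le_mul_of_nonneg_right (hδ i j) (hg j)
    _ ≤ ∑ l, A i l * g l :=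
      single_le_sum (f := fun l => A i l * g l)
        (fun l _ => mul_nonneg (nonneg_of_mem_rowStochastic hA) (hg l)) (mem_univ j)

/-- Doeblin's contraction, with the oscillation of `f` encoded as `f` taking its values in an
interval of length `c`. -/
lemma mulVec_apply_mem_Icc (hA : A ∈ rowStochastic ℝ ι) (hδ : ∀ i j, δ ≤ A i j)
    (hf : ∀ j, f j ∈ Set.Icc a (a + c)) (j₀ i : ι) :
    (A *ᵥ f) i ∈ Set.Icc (a + δ * (f j₀ - a)) (a + δ * (f j₀ - a) + (1 - δ) * c) := by
  have hlow := mul_le_mulVec_apply hA hδ (g := fun l => f l - a)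
    (fun l => by linarith [(hf l).1]) i j₀
  have hup := mul_le_mulVec_apply hA hδ (g := fun l => a + c - f l)
    (fun l => by linarith [(hf l).2]) i j₀
  have hsub : A *ᵥ (fun l => f l - a) = A *ᵥ f - fun _ => a := by
    rw [← mulVec_const_of_mem_rowStochastic hA a, ← mulVec_sub]; rfl
  have hsub' : A *ᵥ (fun l => a + c - f l) = (fun _ => a + c) - A *ᵥ f := by
    rw [← mulVec_const_of_mem_rowStochastic hA (a + c), ← mulVec_sub]; rfl
  rw [hsub] at hlow
  rw [hsub'] at hup
  simp only [Pi.sub_apply] at hlow hup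
  constructor <;> linarith

lemma exists_pow_mulVec_mem_Icc [Nonempty ι] (hA : A ∈ rowStochastic ℝ ι)
    (hδ : ∀ i j, δ ≤ A i j) (hf : ∀ j, f j ∈ Set.Icc a (a + c)) (q : ℕ) :
    ∃ b, ∀ i, (A ^ q *ᵥ f) i ∈ Set.Icc b (b + (1 - δ) ^ q * c) := by
  induction q with
  | zero => exact ⟨a, by simpa using hf⟩
  | succ q ih =>
    obtain ⟨b, hb⟩ := ih
    let j₀ := Classical.arbitrary ι
    refine ⟨b + δ * ((A ^ q *ᵥ f) j₀ - b), fun i => ?_⟩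
    rw [pow_succ' A, ← mulVec_mulVec, pow_succ, mul_comm _ (1 - δ), mul_assoc]
    exact mulVec_apply_mem_Icc hA hδ hb j₀ i

end Doeblin

section Stochastic

variable {S : Matrix ι ι ℝ} {π : ι → ℝ}

lemma vecMul_pow_eq_self (hπS : π ᵥ* S = π) (n : ℕ) : π ᵥ* S ^ n = π := by
  induction n with
  | zero => simp
  | succ n ih => rw [pow_succ, ← vecMul_vecMul, ih, hπS]

lemma pow_succ_apply_pos (hS : S ∈ rowStochastic ℝ ι) {k : ℕ} (hk : ∀ i j, 0 < (S ^ k) i j)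
    (i j : ι) : 0 < (S ^ (k + 1)) i j := by
  obtain ⟨l, -, hl⟩ := exists_ne_zero_of_sum_ne_zero (s := univ) (f := S i) (by
    rw [sum_row_of_mem_rowStochastic hS i]
    exact one_ne_zero)
  rw [pow_succ', mul_apply]
  exact sum_pos' (fun l _ => mul_nonneg (nonneg_of_mem_rowStochastic hS) (hk l j).le)
    ⟨l, mem_univ l, mul_pos ((nonneg_of_mem_rowStochastic hS).lt_of_ne' hl) (hk l j)⟩

lemma abs_pow_apply_sub_le [Nonempty ι] (hS : S ∈ rowStochastic ℝ ι) {k : ℕ} {δ : ℝ}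
    (hδ : ∀ i j, δ ≤ (S ^ k) i j) (hπ0 : ∀ i, 0 ≤ π i) (hπ1 : ∑ i, π i = 1)
    (hπS : π ᵥ* S = π) (n : ℕ) (i j : ι) :
    |(S ^ n) i j - π j| ≤ (1 - δ) ^ (n / k) := by
  have hcol : (fun l => (S ^ n) l j) = (S ^ k) ^ (n / k) *ᵥ fun l => (S ^ (n % k)) l j := by
    ext l
    conv_lhs => rw [← Nat.div_add_mod n k, pow_add, pow_mul]
    rfl
  have hf : ∀ l, (S ^ (n % k)) l j ∈ Set.Icc 0 (0 + 1) := fun l => by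
    rw [zero_add]
    exact ⟨nonneg_of_mem_rowStochastic (pow_mem hS _), le_one_of_mem_rowStochastic (pow_mem hS _)⟩
  obtain ⟨b, hb⟩ := exists_pow_mulVec_mem_Icc (pow_mem hS k) hδ hf (n / k)
  rw [← hcol, mul_one] at hb
  have hmean : π ⬝ᵥ (fun l => (S ^ n) l j) = π j := congrFun (vecMul_pow_eq_self hπS n) j
  simpa [hmean] using abs_sub_dotProduct_le hπ0 hπ1 hb i

theorem tendsto_pow_of_mem_rowStochastic (hS : S ∈ rowStochastic ℝ ι) {k : ℕ}
    (hk : ∀ i j, 0 < (S ^ k) i j) (hπ0 : ∀ i, 0 ≤ π i) (hπ1 : ∑ i, π i = 1)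
    (hπS : π ᵥ* S = π) :
    Tendsto (S ^ ·) atTop (𝓝 (of fun _ j => π j)) := by
  refine tendsto_pi_nhds.2 fun i => tendsto_pi_nhds.2 fun j => ?_
  have : Nonempty ι := ⟨i⟩
  -- Pass to the exponent `k + 1`, so that `n / (k + 1) → ∞`.
  obtain ⟨p, hp⟩ := Finite.exists_min fun p : ι × ι => (S ^ (k + 1)) p.1 p.2
  have hδ0 := pow_succ_apply_pos hS hk p.1 p.2
  have hδ1 : (S ^ (k + 1)) p.1 p.2 ≤ 1 := le_one_of_mem_rowStochastic (pow_mem hS _)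
  have hlim : Tendsto (fun n => (1 - (S ^ (k + 1)) p.1 p.2) ^ (n / (k + 1))) atTop (𝓝 0) :=
    (tendsto_pow_atTop_nhds_zero_of_lt_one (by linarith) (by linarith)).comp
      (Nat.tendsto_div_const_atTop k.succ_ne_zero)
  rw [of_apply, tendsto_iff_norm_sub_tendsto_zero]
  exact squeeze_zero (fun _ => norm_nonneg _)
    (fun n => abs_pow_apply_sub_le hS (fun i j => hp (i, j)) hπ0 hπ1 hπS n i j) hlim

end Stochastic

section Perron

variable {M : Matrix ι ι ℝ} {lam : ℝ} {u v : ι → ℝ}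

noncomputable def doobTransform (M : Matrix ι ι ℝ) (lam : ℝ) (v : ι → ℝ) : Matrix ι ι ℝ :=
  lam⁻¹ • (diagonal v⁻¹ * M * diagonal v)

lemma doobTransform_apply (i j : ι) :
    doobTransform M lam v i j = lam⁻¹ * ((v i)⁻¹ * M i j * v j) := by
  simp [doobTransform, diagonal_mul, mul_diagonal]

lemma doobTransform_pow (hv : ∀ i, v i ≠ 0) (n : ℕ) :
    doobTransform M lam v ^ n = (lam ^ n)⁻¹ • (diagonal v⁻¹ * M ^ n * diagonal v) := by
  have hvv : diagonal v * diagonal v⁻¹ = 1 := by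
    rw [diagonal_mul_diagonal, ← diagonal_one]
    exact congrArg diagonal (funext fun i => mul_inv_cancel₀ (hv i))
  induction n with
  | zero =>
    rw [pow_zero, pow_zero, pow_zero, inv_one, one_smul, Matrix.mul_one, diagonal_mul_diagonal,
      ← diagonal_one]
    exact congrArg diagonal (funext fun i => (inv_mul_cancel₀ (hv i)).symm)
  | succ n ih =>
    rw [pow_succ, ih, doobTransform, smul_mul_smul_comm, pow_succ, pow_succ, mul_inv]
    congr 1
    simp only [Matrix.mul_assoc]
    rw [← Matrix.mul_assoc (diagonal v), hvv, Matrix.one_mul]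

lemma doobTransform_mem_rowStochastic (hM : ∀ i j, 0 ≤ M i j) (hlam : 0 < lam)
    (hv : ∀ i, 0 < v i) (hMv : M *ᵥ v = lam • v) :
    doobTransform M lam v ∈ rowStochastic ℝ ι := by
  refine mem_rowStochastic_iff_sum.2 ⟨fun i j => ?_, fun i => ?_⟩
  · rw [doobTransform_apply]
    have := hv i; have := hv j; have := hM i j
    positivity
  · have hrow : ∑ j, M i j * v j = lam * v i := congrFun hMv i
    simp_rw [doobTransform_apply, mul_assoc, ← mul_sum, hrow]
    field_simp [(hv i).ne']

lemma vecMul_doobTransform (hlam : lam ≠ 0) (hv : ∀ i, v i ≠ 0) (hu : u ᵥ* M = lam • u) :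
    (u * v) ᵥ* doobTransform M lam v = u * v := by
  ext j
  have hcol : ∑ i, u i * M i j = lam * u j := congrFun hu j
  simp only [vecMul, dotProduct, doobTransform_apply, Pi.mul_apply]
  calc ∑ i, u i * v i * (lam⁻¹ * ((v i)⁻¹ * M i j * v j))
      = lam⁻¹ * v j * ∑ i, u i * M i j := by
        rw [mul_sum]
        exact sum_congr rfl fun i _ => by field_simp [hv i]
    _ = u j * v j := by rw [hcol]; field_simp

theorem tendsto_inv_pow_smul_pow (hM : ∀ i j, 0 ≤ M i j) {k : ℕ} (hk : ∀ i j, 0 < (M ^ k) i j)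
    (hlam : 0 < lam) (hu : u ᵥ* M = lam • u) (hv : M *ᵥ v = lam • v) (hu0 : ∀ i, 0 ≤ u i)
    (hv0 : ∀ i, 0 < v i) (huv : ∑ i, u i * v i = 1) :
    Tendsto (fun n => (lam ^ n)⁻¹ • M ^ n) atTop (𝓝 (vecMulVec v u)) := by
  have hv' : ∀ i, v i ≠ 0 := fun i => (hv0 i).ne'
  have hSk : ∀ i j, 0 < (doobTransform M lam v ^ k) i j := fun i j => by
    simp only [doobTransform_pow hv', smul_apply, mul_diagonal, diagonal_mul, smul_eq_mul,
      Pi.inv_apply]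
    have := hk i j; have := hv0 i; have := hv0 j
    positivity
  have hS := tendsto_pow_of_mem_rowStochastic (doobTransform_mem_rowStochastic hM hlam hv0 hv)
    hSk (π := u * v) (fun i => mul_nonneg (hu0 i) (hv0 i).le) huv
    (vecMul_doobTransform hlam.ne' hv' hu)
  have hconj : ∀ n, (lam ^ n)⁻¹ • M ^ n =
      diagonal v * doobTransform M lam v ^ n * diagonal v⁻¹ := fun n => by
    ext i j
    simp [doobTransform_pow hv', mul_diagonal, diagonal_mul]
    field_simp [hv' i, hv' j]
  simp_rw [hconj]
  convert (tendsto_const_nhds.mul hS).mul tendsto_const_nhds using 2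
  ext i j
  simp [vecMulVec, mul_diagonal, diagonal_mul]
  field_simp [hv' j]

end Perron

section Cocycle

variable {M : Matrix ι ι ℝ} {lam : ℝ} {v : ι → ℝ}

lemma pow_mulVec_eq_of_mulVec_eq (hMv : M *ᵥ v = lam • v) (n : ℕ) :
    M ^ n *ᵥ v = lam ^ n • v := by
  induction n with
  | zero => simp
  | succ n ih => rw [pow_succ', ← mulVec_mulVec, ih, mulVec_smul, hMv, smul_smul, pow_succ]

lemma pow_apply_mul_le (hM : ∀ i j, 0 ≤ M i j) (hv : ∀ i, 0 ≤ v i) (hMv : M *ᵥ v = lam • v)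
    (n : ℕ) (i j : ι) : (M ^ n) i j * v j ≤ lam ^ n * v i :=
  calc (M ^ n) i j * v j ≤ ∑ l, (M ^ n) i l * v l :=
        single_le_sum (f := fun l => (M ^ n) i l * v l)
          (fun l _ => mul_nonneg (pow_apply_nonneg hM n i l) (hv l)) (mem_univ j)
    _ = lam ^ n * v i := congrFun (pow_mulVec_eq_of_mulVec_eq hMv n) i

lemma norm_mul_apply_sub_pow_succ_le (hM : ∀ i j, 0 ≤ M i j) (hlam : 0 ≤ lam)
    (hv : ∀ i, 0 < v i) (hMv : M *ᵥ v = lam • v) {C : Matrix ι ι ℝ} (hC : ∀ i j, 0 ≤ C i j)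
    {A A' : Matrix ι ι ℂ} {n : ℕ} {i j : ι} {K L r s : ℝ} (hr : 0 ≤ r) (hA : ∀ k, ‖A i k‖ ≤ M i k)
    (hAC : ∀ k, ‖A i k - M i k‖ ≤ C i k * r)
    (hA' : ∀ k, ‖A' k j - (M ^ n) k j‖ ≤ L * v k * lam ^ n * s)
    (hCv : (C *ᵥ v) i ≤ K * (lam * v i * v j)) :
    ‖(A * A') i j - (M ^ (n + 1)) i j‖ ≤ (L * s + K * r) * v i * lam ^ (n + 1) := by
  have hpow : ∀ k, |(M ^ n) k j| ≤ lam ^ n * v k / v j := fun k => by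
    rw [abs_of_nonneg (pow_apply_nonneg hM n k j), le_div_iff₀ (hv j)]
    exact pow_apply_mul_le hM (fun i => (hv i).le) hMv n k j
  have hterm : ∀ k, ‖A i k‖ * ‖A' k j - (M ^ n) k j‖ + ‖A i k - M i k‖ * |(M ^ n) k j| ≤
      M i k * v k * (L * lam ^ n * s) + C i k * v k * (lam ^ n * r / v j) := fun k =>
    (add_le_add (mul_le_mul (hA k) (hA' k) (norm_nonneg _) (hM i k))
      (mul_le_mul (hAC k) (hpow k) (abs_nonneg _) (mul_nonneg (hC i k) hr))).trans_eq (by ring)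
  rw [pow_succ' M]
  refine (norm_mul_apply_sub_le _ _ _ _ i j).trans ?_
  calc _ ≤ ∑ k, (M i k * v k * (L * lam ^ n * s) + C i k * v k * (lam ^ n * r / v j)) :=
        sum_le_sum fun k _ => hterm k
    _ = (M *ᵥ v) i * (L * lam ^ n * s) + (C *ᵥ v) i * (lam ^ n * r / v j) := by
        simp only [sum_add_distrib, mulVec, dotProduct, sum_mul]
    _ ≤ lam * v i * (L * lam ^ n * s) + K * (lam * v i * v j) * (lam ^ n * r / v j) := by
        rw [hMv, Pi.smul_apply, smul_eq_mul]
        have := hv j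
        gcongr
    _ = (L * s + K * r) * v i * lam ^ (n + 1) := by
        field_simp [(hv j).ne']
        ring

variable {E : Type*} [SeminormedAddCommGroup E]

theorem exists_norm_cocycle_sub_pow_le (hlam : 0 < lam) (hv : ∀ i, 0 < v i)
    (hMv : M *ᵥ v = lam • v) {B : E → Matrix ι ι ℂ} (hBM : ∀ y i j, ‖B y i j‖ ≤ M i j)
    {C : Matrix ι ι ℝ} (hC : ∀ i j, 0 ≤ C i j) (hBC : ∀ y i j, ‖B y i j - M i j‖ ≤ C i j * ‖y‖)
    {R : E → E} {θ : ℝ} (hθ : θ < 1) (hR : ∀ y, ‖R y‖ ≤ θ * ‖y‖)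
    {Bc : ℕ → E → Matrix ι ι ℂ} (hBc0 : ∀ y, Bc 0 y = 1)
    (hBcS : ∀ n y, Bc (n + 1) y = B y * Bc n (R y)) :
    ∃ D, ∀ n y i j, ‖Bc n y i j - (M ^ n) i j‖ ≤ D * lam ^ n * ‖y‖ := by
  have hM : ∀ i j, 0 ≤ M i j := fun i j => (norm_nonneg _).trans (hBM 0 i j)
  obtain ⟨K, hK⟩ := Finite.exists_le fun p : ι × ι => (C *ᵥ v) p.1 / (lam * v p.1 * v p.2)
  have hCv : ∀ i j, (C *ᵥ v) i ≤ max K 0 * (lam * v i * v j) := fun i j => by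
    have := hv i; have := hv j
    exact (div_le_iff₀ (by positivity)).1 ((hK (i, j)).trans (le_max_left K 0))
  set L := max K 0 / (1 - θ)
  have hL0 : 0 ≤ L := div_nonneg (le_max_right K 0) (by linarith)
  have hLθ : L * θ + max K 0 = L := by
    have : L * (1 - θ) = max K 0 := div_mul_cancel₀ _ (by linarith)
    linarith
  -- Weighting row `i` by `v i` lets `M v = λ v` absorb the factor `B y` in each step.
  suffices h : ∀ n y i j, ‖Bc n y i j - (M ^ n) i j‖ ≤ L * v i * lam ^ n * ‖y‖ by
    refine ⟨L * ∑ i, v i, fun n y i j => (h n y i j).trans ?_⟩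
    gcongr
    exact single_le_sum (fun i _ => (hv i).le) (mem_univ i)
  intro n
  induction n with
  | zero =>
    intro y i j
    have h0 : Bc 0 y i j - ((M ^ 0) i j : ℂ) = 0 := by
      rw [hBc0, pow_zero]
      by_cases hij : i = j <;> simp [hij, one_apply]
    rw [h0, norm_zero]
    exact mul_nonneg (mul_nonneg (mul_nonneg hL0 (hv i).le) (pow_nonneg hlam.le 0))
      (norm_nonneg y)
  | succ n ih =>
    intro y i j
    have hih : ∀ k, ‖Bc n (R y) k j - (M ^ n) k j‖ ≤ L * v k * lam ^ n * (θ * ‖y‖) := fun k =>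
      (ih (R y) k j).trans (mul_le_mul_of_nonneg_left (hR y)
        (mul_nonneg (mul_nonneg hL0 (hv k).le) (pow_nonneg hlam.le n)))
    rw [hBcS]
    refine (norm_mul_apply_sub_pow_succ_le hM hlam.le hv hMv hC (norm_nonneg y) (hBM y i)
      (hBC y i) hih (hCv i j)).trans_eq ?_
    linear_combination (‖y‖ * v i * lam ^ (n + 1)) * hLθ

end Cocycle

section Limit

variable {E : Type*} [SeminormedAddCommGroup E]

theorem tendsto_inv_pow_smul_of_norm_sub_pow_le {M P : Matrix ι ι ℝ} {lam : ℝ} (hlam : 0 < lam)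
    (hP : Tendsto (fun n => (lam ^ n)⁻¹ • M ^ n) atTop (𝓝 P)) {A : ℕ → E → Matrix ι ι ℂ}
    {D : ℝ} (hA : ∀ n y i j, ‖A n y i j - (M ^ n) i j‖ ≤ D * lam ^ n * ‖y‖) :
    Tendsto (fun p : ℕ × E => (lam ^ p.1)⁻¹ • A p.1 p.2) (atTop ×ˢ 𝓝 0)
      (𝓝 (P.map Complex.ofReal)) := by
  refine tendsto_pi_nhds.2 fun i => tendsto_pi_nhds.2 fun j => ?_
  have hsplit : ∀ p : ℕ × E, ((lam ^ p.1)⁻¹ • A p.1 p.2) i j =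
      (((lam ^ p.1)⁻¹ • M ^ p.1) i j : ℂ) + (lam ^ p.1)⁻¹ • (A p.1 p.2 i j - (M ^ p.1) i j) := by
    intro p
    simp only [smul_apply, smul_sub, Complex.real_smul, smul_eq_mul, Complex.ofReal_mul]
    ring
  have hmain : Tendsto (fun p : ℕ × E => (((lam ^ p.1)⁻¹ • M ^ p.1) i j : ℂ)) (atTop ×ˢ 𝓝 0)
      (𝓝 (P i j)) :=
    (Complex.continuous_ofReal.tendsto _).comp
      ((tendsto_pi_nhds.1 (tendsto_pi_nhds.1 hP i) j).comp tendsto_fst)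
  have herr : Tendsto (fun p : ℕ × E => (lam ^ p.1)⁻¹ • (A p.1 p.2 i j - (M ^ p.1) i j))
      (atTop ×ˢ 𝓝 0) (𝓝 0) := by
    refine squeeze_zero_norm (a := fun p => D * ‖p.2‖) (fun p => ?_) ?_
    · rw [norm_smul, Real.norm_of_nonneg (inv_nonneg.2 (pow_nonneg hlam.le _))]
      calc _ ≤ (lam ^ p.1)⁻¹ * (D * lam ^ p.1 * ‖p.2‖) :=
            mul_le_mul_of_nonneg_left (hA _ _ i j) (inv_nonneg.2 (pow_nonneg hlam.le _))
        _ = D * ‖p.2‖ := by field_simp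
    · simpa using (tendsto_snd.norm.const_mul D : Tendsto _ (atTop ×ˢ 𝓝 (0 : E)) _)
  simpa [hsplit] using hmain.add herr

lemma exists_forall_norm_toEuclideanCLM_sub_lt {F : ℕ → E → Matrix ι ι ℂ}
    {X : Matrix ι ι ℂ} (hF : Tendsto (fun p : ℕ × E => F p.1 p.2) (atTop ×ˢ 𝓝 0) (𝓝 X))
    {ε : ℝ} (hε : 0 < ε) :
    ∃ δ, 0 < δ ∧ ∃ n₀ : ℕ, ∀ n, n₀ ≤ n → ∀ y : E, ‖y‖ < δ →
      ‖toEuclideanCLM (𝕜 := ℂ) (F n y - X)‖ < ε := by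
  have hcont : Continuous (toEuclideanCLM (n := ι) (𝕜 := ℂ)) :=
    LinearMap.continuous_of_finiteDimensional
      (toEuclideanCLM (n := ι) (𝕜 := ℂ)).toAlgEquiv.toLinearMap
  have hlim := (hcont.tendsto 0).comp (sub_self X ▸ hF.sub_const X)
  obtain ⟨pa, hpa, pb, hpb, hp⟩ := eventually_prod_iff.1 (Metric.tendsto_nhds.1 hlim ε hε)
  obtain ⟨n₀, hn₀⟩ := eventually_atTop.1 hpa
  obtain ⟨δ, hδ, hδpb⟩ := Metric.eventually_nhds_iff.1 hpb
  refine ⟨δ, hδ, n₀, fun n hn y hy => ?_⟩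
  simpa using hp (hn₀ n hn) (hδpb (by simpa using hy))

end Limit

end Matrix

theorem stmt8_general
    {N m : ℕ}
    (T : Fin N → Fin N → Finset (EuclideanSpace ℝ (Fin m)))
    (M : Matrix (Fin N) (Fin N) ℝ)
    (hM : ∀ i j, M i j = (T i j).card)
    (hprim : ∃ k : ℕ, ∀ i j, 0 < (M ^ k) i j)
    (lam : ℝ) (hlam : 1 < lam)
    (u v : Fin N → ℝ)
    (hu : M.vecMul u = lam • u) (hv : M.mulVec v = lam • v)
    (hupos : ∀ i, 0 < u i) (hvpos : ∀ i, 0 < v i)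
    (huv : ∑ i, u i * v i = 1)
    (P : Matrix (Fin N) (Fin N) ℝ)
    (hPdef : ∀ i j, P i j = v i * u j)
    (B : EuclideanSpace ℝ (Fin m) → Matrix (Fin N) (Fin N) ℂ)
    (hB : ∀ y i j, B y i j =
      ∑ x ∈ T i j, Complex.exp (2 * Real.pi * Complex.I * ((inner ℝ x y : ℝ) : ℂ)))
    (R : EuclideanSpace ℝ (Fin m) →L[ℝ] EuclideanSpace ℝ (Fin m))
    (hRcontr : ‖R‖ < 1)
    (Bc : ℕ → EuclideanSpace ℝ (Fin m) → Matrix (Fin N) (Fin N) ℂ)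
    (hBc0 : ∀ y, Bc 0 y = 1)
    (hBcS : ∀ n y, Bc (n + 1) y = B y * Bc n (R y)) :
    ∀ ε : ℝ, 0 < ε → ∃ δ' : ℝ, 0 < δ' ∧ ∃ n₀ : ℕ,
      ∀ n : ℕ, n₀ ≤ n → ∀ y : EuclideanSpace ℝ (Fin m), ‖y‖ < δ' →
        ‖Matrix.toEuclideanCLM (𝕜 := ℂ)
          ((lam ^ n)⁻¹ • Bc n y - P.map Complex.ofReal)‖ < ε := by
  intro ε hε
  have hlam0 : 0 < lam := by linarith
  obtain ⟨k, hk⟩ := hprim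
  have hP : vecMulVec v u = P := by ext i j; rw [hPdef]; rfl
  have hperron := hP ▸ tendsto_inv_pow_smul_pow (fun i j => by rw [hM]; positivity) hk hlam0
    hu hv (fun i => (hupos i).le) hvpos huv
  obtain ⟨D, hD⟩ := exists_norm_cocycle_sub_pow_le hlam0 hvpos hv
    (fun y i j => by rw [hB, hM]; exact norm_sum_exp_inner_le _ _)
    (C := of fun i j => 2 * Real.pi * ∑ x ∈ T i j, ‖x‖) (fun i j => by rw [of_apply]; positivity)
    (fun y i j => by rw [hB, hM]; exact norm_sum_exp_inner_sub_card_le _ _)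
    hRcontr R.le_opNorm hBc0 hBcS
  exact exists_forall_norm_toEuclideanCLM_sub_lt
    (tendsto_inv_pow_smul_of_norm_sub_pow_le hlam0 hperron hD) hε

/-- for every `ε > 0` there are `δ' > 0` and `n₀` such that
`‖λ⁻ⁿ B⁽ⁿ⁾(y) − P‖₂ < ε` for all `n ≥ n₀` and all `‖y‖₂ < δ'`, where `P = |v⟩⟨u|`
is the rank-one Perron projector of `M`. -/
theorem stmt8
    {N m : ℕ} (hN : 1 ≤ N) (hm : 1 ≤ m)
    (T : Fin N → Fin N → Finset (EuclideanSpace ℝ (Fin m)))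
    (M : Matrix (Fin N) (Fin N) ℝ)
    (hM : ∀ i j, M i j = (T i j).card)
    (hprim : ∃ k : ℕ, ∀ i j, 0 < (M ^ k) i j)
    (lam : ℝ) (hlam : 1 < lam)
    (u v : Fin N → ℝ)
    (hu : M.vecMul u = lam • u) (hv : M.mulVec v = lam • v)
    (hupos : ∀ i, 0 < u i) (hvpos : ∀ i, 0 < v i)
    (hvsum : ∑ i, v i = 1) (huv : ∑ i, u i * v i = 1)
    (P : Matrix (Fin N) (Fin N) ℝ)
    (hPdef : ∀ i j, P i j = v i * u j)
    (B : EuclideanSpace ℝ (Fin m) → Matrix (Fin N) (Fin N) ℂ)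
    (hB : ∀ y i j, B y i j =
      ∑ x ∈ T i j, Complex.exp (2 * Real.pi * Complex.I * ((inner ℝ x y : ℝ) : ℂ)))
    (R : EuclideanSpace ℝ (Fin m) →L[ℝ] EuclideanSpace ℝ (Fin m))
    (hRnormal : R.comp (ContinuousLinearMap.adjoint R) =
      (ContinuousLinearMap.adjoint R).comp R)
    (hRcontr : ‖R‖ < 1)
    (Bc : ℕ → EuclideanSpace ℝ (Fin m) → Matrix (Fin N) (Fin N) ℂ)
    (hBc0 : ∀ y, Bc 0 y = 1)
    (hBcS : ∀ n y, Bc (n + 1) y = B y * Bc n (R y)) :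
    ∀ ε : ℝ, 0 < ε → ∃ δ' : ℝ, 0 < δ' ∧ ∃ n₀ : ℕ,
      ∀ n : ℕ, n₀ ≤ n → ∀ y : EuclideanSpace ℝ (Fin m), ‖y‖ < δ' →
        ‖Matrix.toEuclideanCLM (𝕜 := ℂ)
          ((lam ^ n)⁻¹ • Bc n y - P.map Complex.ofReal)‖ < ε :=
  stmt8_general T M hM hprim lam hlam u v hu hv hupos hvpos huv P hPdef B hB R hRcontr Bc hBc0 hBcS
end

section
/- The scaled internal cocycle sequence (λ^{−n} B^{(n)}(y))_{n∈ℕ} converges compactly on ℝ^m, i.e., uniformly on every compact subset of ℝ^m. Consequently, the matrix function C(y) := lim_{n→∞} λ^{−n} B^{(n)}(y) is well defined for every y ∈ ℝ^m and is continuous. -/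
/-!
Conjugating `λ⁻¹ B(y)` by the positive eigenvector `v` of `M` gives a matrix `A(y)` that is
dominated entrywise by the row-stochastic matrix `S = A(0)`, so `‖A(y)‖ ≤ 1` in the
max-row-sum norm, and `‖A(y) - S‖ ≤ c ‖y‖`. For the cocycle `W` of `A` this gives
`‖W_p(z) - S^p‖ ≤ c ‖z‖ / (1 - θ)`, and `W_{n+p}(y) = W_n(y) W_p(Rⁿ y)` then puts `W_{n+p}(y)`
within `c θⁿ ‖y‖ / (1 - θ)` of `W_n(y) S^p`. Since `S` is primitive, right multiplication by a
power of `S` contracts the matrices with zero row sums, so `(S^p)` is Cauchy; hence `W` is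
uniformly Cauchy on bounded sets, and its limit is continuous as a locally uniform limit of
continuous functions.
-/

open Filter Matrix Topology Metric Bornology

section Cocycle

variable {X 𝔸 : Type*}

def cocycle [Monoid 𝔸] (A : X → 𝔸) (R : X → X) : ℕ → X → 𝔸
  | 0, _ => 1
  | n + 1, x => A x * cocycle A R n (R x)

section Monoid

variable [Monoid 𝔸] (A : X → 𝔸) (R : X → X)

@[simp] lemma cocycle_zero (x : X) : cocycle A R 0 x = 1 := rfl

lemma cocycle_succ (n : ℕ) (x : X) : cocycle A R (n + 1) x = A x * cocycle A R n (R x) := rfl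

lemma cocycle_add (n p : ℕ) (x : X) :
    cocycle A R (n + p) x = cocycle A R n x * cocycle A R p (R^[n] x) := by
  induction n generalizing x with
  | zero => simp
  | succ n ih =>
    rw [Nat.add_right_comm, cocycle_succ, ih, cocycle_succ, mul_assoc, Function.iterate_succ_apply]

variable {A R} in
lemma eq_cocycle {F : ℕ → X → 𝔸} (h0 : ∀ x, F 0 x = 1)
    (hsucc : ∀ n x, F (n + 1) x = A x * F n (R x)) : F = cocycle A R := by
  funext n x
  induction n generalizing x with
  | zero => exact h0 x
  | succ n ih => rw [hsucc, ih, cocycle_succ]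

variable {A R} in
lemma continuous_cocycle [TopologicalSpace X] [TopologicalSpace 𝔸] [ContinuousMul 𝔸]
    (hA : Continuous A) (hR : Continuous R) (n : ℕ) :
    Continuous (cocycle A R n) := by
  induction n with
  | zero => exact continuous_const
  | succ n ih => exact hA.mul (ih.comp hR)

end Monoid

lemma norm_iterate_le [SeminormedAddCommGroup X] {R : X → X} {θ : ℝ}
    (hR : ∀ x, ‖R x‖ ≤ θ * ‖x‖) (hθ : 0 ≤ θ) (n : ℕ) (x : X) : ‖R^[n] x‖ ≤ θ ^ n * ‖x‖ := by
  induction n with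
  | zero => simp
  | succ n ih =>
    rw [Function.iterate_succ_apply', pow_succ', mul_assoc]
    exact (hR _).trans (mul_le_mul_of_nonneg_left ih hθ)

section Normed

variable [NormedRing 𝔸] [NormOneClass 𝔸] {A : X → 𝔸} {R : X → X}

lemma norm_cocycle_le_one (hA : ∀ x, ‖A x‖ ≤ 1) (n : ℕ) (x : X) : ‖cocycle A R n x‖ ≤ 1 := by
  induction n generalizing x with
  | zero => simp
  | succ n ih =>
    exact (norm_mul_le _ _).trans (mul_le_one₀ (hA x) (norm_nonneg _) (ih (R x)))

variable [SeminormedAddCommGroup X] {θ c : ℝ}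

lemma norm_cocycle_sub_pow_le (hA : ∀ x, ‖A x‖ ≤ 1) (hc : 0 ≤ c)
    (hAc : ∀ x, ‖A x - A 0‖ ≤ c * ‖x‖) (hR : ∀ x, ‖R x‖ ≤ θ * ‖x‖) (hθ : θ < 1)
    (n : ℕ) (x : X) : ‖cocycle A R n x - A 0 ^ n‖ ≤ c / (1 - θ) * ‖x‖ := by
  have hK : 0 ≤ c / (1 - θ) := div_nonneg hc (sub_nonneg.2 hθ.le)
  induction n generalizing x with
  | zero => simpa using mul_nonneg hK (norm_nonneg x)
  | succ n ih =>
    have hsplit : cocycle A R (n + 1) x - A 0 ^ (n + 1) =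
        (A x - A 0) * cocycle A R n (R x) + A 0 * (cocycle A R n (R x) - A 0 ^ n) := by
      rw [cocycle_succ, pow_succ']; noncomm_ring
    rw [hsplit]
    calc _ ≤ ‖A x - A 0‖ * ‖cocycle A R n (R x)‖ + ‖A 0‖ * ‖cocycle A R n (R x) - A 0 ^ n‖ :=
          (norm_add_le _ _).trans (add_le_add (norm_mul_le _ _) (norm_mul_le _ _))
      _ ≤ c * ‖x‖ * 1 + 1 * (c / (1 - θ) * (θ * ‖x‖)) := by
          gcongr
          · exact hAc x
          · exact norm_cocycle_le_one hA n _
          · exact hA 0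
          · exact (ih _).trans (mul_le_mul_of_nonneg_left (hR x) hK)
      _ = c / (1 - θ) * ‖x‖ := by field_simp [(sub_pos.2 hθ).ne']; ring

lemma dist_cocycle_add_le (hA : ∀ x, ‖A x‖ ≤ 1) (hc : 0 ≤ c)
    (hAc : ∀ x, ‖A x - A 0‖ ≤ c * ‖x‖) (hR : ∀ x, ‖R x‖ ≤ θ * ‖x‖) (hθ0 : 0 ≤ θ) (hθ1 : θ < 1)
    (n p q : ℕ) (x : X) :
    dist (cocycle A R (n + p) x) (cocycle A R (n + q) x) ≤
      2 * (c / (1 - θ) * (θ ^ n * ‖x‖)) + dist (A 0 ^ p) (A 0 ^ q) := by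
  set W := cocycle A R n x
  have htail : ∀ p, ‖cocycle A R (n + p) x - W * A 0 ^ p‖ ≤ c / (1 - θ) * (θ ^ n * ‖x‖) := by
    intro p
    rw [cocycle_add, ← mul_sub]
    calc _ ≤ 1 * (c / (1 - θ) * ‖R^[n] x‖) :=
          (norm_mul_le _ _).trans (mul_le_mul (norm_cocycle_le_one hA n x)
            (norm_cocycle_sub_pow_le hA hc hAc hR hθ1 p _) (norm_nonneg _) zero_le_one)
      _ ≤ c / (1 - θ) * (θ ^ n * ‖x‖) := by
          rw [one_mul]
          exact mul_le_mul_of_nonneg_left (norm_iterate_le hR hθ0 n x)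
            (div_nonneg hc (sub_nonneg.2 hθ1.le))
  have hmid : dist (W * A 0 ^ p) (W * A 0 ^ q) ≤ dist (A 0 ^ p) (A 0 ^ q) := by
    rw [dist_eq_norm, dist_eq_norm, ← mul_sub]
    exact (norm_mul_le _ _).trans
      (mul_le_of_le_one_left (norm_nonneg _) (norm_cocycle_le_one hA n x))
  have hp : dist (cocycle A R (n + p) x) (W * A 0 ^ p) ≤ c / (1 - θ) * (θ ^ n * ‖x‖) := by
    rw [dist_eq_norm]; exact htail p
  have hq : dist (W * A 0 ^ q) (cocycle A R (n + q) x) ≤ c / (1 - θ) * (θ ^ n * ‖x‖) := by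
    rw [dist_comm, dist_eq_norm]; exact htail q
  linarith [dist_triangle4 (cocycle A R (n + p) x) (W * A 0 ^ p) (W * A 0 ^ q)
    (cocycle A R (n + q) x)]

lemma uniformCauchySeqOn_cocycle (hA : ∀ x, ‖A x‖ ≤ 1) (hc : 0 ≤ c)
    (hAc : ∀ x, ‖A x - A 0‖ ≤ c * ‖x‖) (hR : ∀ x, ‖R x‖ ≤ θ * ‖x‖) (hθ0 : 0 ≤ θ) (hθ1 : θ < 1)
    (hP : CauchySeq fun n => A 0 ^ n) {s : Set X} (hs : IsBounded s) :
    UniformCauchySeqOn (cocycle A R) atTop s := by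
  obtain ⟨r, hr⟩ := isBounded_iff_forall_norm_le.1 hs
  rw [Metric.uniformCauchySeqOn_iff]
  intro ε hε
  have hsmall : Tendsto (fun n => 2 * (c / (1 - θ) * (θ ^ n * r))) atTop (𝓝 0) := by
    simpa using (((tendsto_pow_atTop_nhds_zero_of_lt_one hθ0 hθ1).mul_const r).const_mul
      (c / (1 - θ))).const_mul 2
  obtain ⟨n₀, hn₀⟩ := (hsmall.eventually (gt_mem_nhds (half_pos hε))).exists
  obtain ⟨p₀, hp₀⟩ := Metric.cauchySeq_iff.1 hP (ε / 2) (half_pos hε)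
  refine ⟨n₀ + p₀, fun a ha b hb x hx => ?_⟩
  obtain ⟨p, rfl⟩ := Nat.exists_eq_add_of_le ((Nat.le_add_right n₀ p₀).trans ha)
  obtain ⟨q, rfl⟩ := Nat.exists_eq_add_of_le ((Nat.le_add_right n₀ p₀).trans hb)
  have hx : 2 * (c / (1 - θ) * (θ ^ n₀ * ‖x‖)) ≤ 2 * (c / (1 - θ) * (θ ^ n₀ * r)) := by
    have : 0 ≤ c / (1 - θ) := div_nonneg hc (sub_nonneg.2 hθ1.le)
    gcongr
    exact hr x hx
  linarith [dist_cocycle_add_le hA hc hAc hR hθ0 hθ1 n₀ p q x, hp₀ p (by omega) q (by omega)]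

theorem exists_tendstoUniformlyOn_cocycle [CompleteSpace 𝔸] (hA : ∀ x, ‖A x‖ ≤ 1) (hc : 0 ≤ c)
    (hAc : ∀ x, ‖A x - A 0‖ ≤ c * ‖x‖) (hR : ∀ x, ‖R x‖ ≤ θ * ‖x‖) (hθ0 : 0 ≤ θ) (hθ1 : θ < 1)
    (hP : CauchySeq fun n => A 0 ^ n) :
    ∃ C : X → 𝔸, ∀ s, IsBounded s → TendstoUniformlyOn (cocycle A R) C atTop s := by
  have hcauchy : ∀ s : Set X, IsBounded s → UniformCauchySeqOn (cocycle A R) atTop s :=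
    fun _ => uniformCauchySeqOn_cocycle hA hc hAc hR hθ0 hθ1 hP
  choose C hC using fun x => cauchySeq_tendsto_of_complete
    ((hcauchy _ isBounded_singleton).cauchySeq (Set.mem_singleton x))
  exact ⟨C, fun s hs => (hcauchy s hs).tendstoUniformlyOn_of_tendsto fun x _ => hC x⟩

end Normed

end Cocycle

lemma continuous_of_forall_isBounded_tendstoUniformlyOn {X β ι : Type*} [PseudoMetricSpace X]
    [UniformSpace β] {F : ι → X → β} {f : X → β} {l : Filter ι} [l.NeBot]
    (hF : ∀ n, Continuous (F n)) (h : ∀ s, IsBounded s → TendstoUniformlyOn F f l s) :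
    Continuous f :=
  (tendstoLocallyUniformly_of_forall_exists_nhds fun x =>
    ⟨ball x 1, ball_mem_nhds x one_pos, h _ isBounded_ball⟩).continuous (Frequently.of_forall hF)

theorem cauchySeq_pow_of_norm_mul_pow_le {𝔸 : Type*} [NormedRing 𝔸] [NormOneClass 𝔸] {P e : 𝔸}
    (hPe : P * e = e) (hP : ‖P‖ ≤ 1) {k : ℕ} (hk : 0 < k) {ρ : ℝ} (hρ0 : 0 ≤ ρ) (hρ1 : ρ < 1)
    (hcontr : ∀ Z, Z * e = 0 → ‖Z * P ^ k‖ ≤ ρ * ‖Z‖) : CauchySeq fun n => P ^ n := by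
  have hPpow : ∀ n, P ^ n * e = e := fun n => by
    induction n with
    | zero => simp
    | succ n ih => rw [pow_succ', mul_assoc, ih, hPe]
  have hiter : ∀ q Z, Z * e = 0 → ‖Z * P ^ (k * q)‖ ≤ ρ ^ q * ‖Z‖ := by
    intro q
    induction q with
    | zero => simp
    | succ q ih =>
      intro Z hZ
      rw [mul_add, mul_one, pow_add, ← mul_assoc]
      calc _ ≤ ρ * ‖Z * P ^ (k * q)‖ := hcontr _ (by rw [mul_assoc, hPpow, hZ])
        _ ≤ ρ * (ρ ^ q * ‖Z‖) := mul_le_mul_of_nonneg_left (ih Z hZ) hρ0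
        _ = ρ ^ (q + 1) * ‖Z‖ := by ring
  refine cauchySeq_of_le_tendsto_0 (fun N => 2 * ρ ^ (N / k)) (fun a b N ha hb => ?_) ?_
  · have hN : k * (N / k) ≤ N := Nat.mul_div_le N k
    obtain ⟨s, rfl⟩ : ∃ s, a = s + k * (N / k) := ⟨a - k * (N / k), by omega⟩
    obtain ⟨t, rfl⟩ : ∃ t, b = t + k * (N / k) := ⟨b - k * (N / k), by omega⟩
    have hZ : (P ^ s - P ^ t) * e = 0 := by rw [sub_mul, hPpow, hPpow, sub_self]
    have hbound : ‖P ^ s - P ^ t‖ ≤ 2 := by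
      have hpow : ∀ j, ‖P ^ j‖ ≤ 1 := fun j =>
        (norm_pow_le P j).trans (pow_le_one₀ (norm_nonneg P) hP)
      linarith [norm_sub_le (P ^ s) (P ^ t), hpow s, hpow t]
    -- `P ^ a - P ^ b = (P ^ s - P ^ t) * (P ^ k) ^ (N / k)`, and `P ^ s - P ^ t` kills `e`.
    rw [dist_eq_norm, pow_add, pow_add, ← sub_mul]
    calc _ ≤ ρ ^ (N / k) * ‖P ^ s - P ^ t‖ := hiter _ _ hZ
      _ ≤ ρ ^ (N / k) * 2 := mul_le_mul_of_nonneg_left hbound (pow_nonneg hρ0 _)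
      _ = _ := mul_comm _ _
  · simpa using ((tendsto_pow_atTop_nhds_zero_of_lt_one hρ0 hρ1).comp
      (Nat.tendsto_div_const_atTop hk.ne')).const_mul 2

section DiagConj

variable {n K : Type*} [Fintype n] [DecidableEq n] [Field K] {w : n → K}

def diagConj (w : n → K) (X : Matrix n n K) : Matrix n n K := diagonal w⁻¹ * X * diagonal w

@[simp] lemma diagConj_apply (w : n → K) (X : Matrix n n K) (i j : n) :
    diagConj w X i j = (w i)⁻¹ * X i j * w j := by
  simp [diagConj, diagonal_mul, mul_diagonal]

lemma diagConj_sub (X Y : Matrix n n K) : diagConj w (X - Y) = diagConj w X - diagConj w Y := by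
  simp only [diagConj, Matrix.mul_sub, Matrix.sub_mul]

lemma diagConj_one (hw : ∀ i, w i ≠ 0) : diagConj w 1 = 1 := by
  ext i j
  by_cases h : i = j
  · subst h; simp [hw i]
  · simp [one_apply, h]

lemma diagConj_mul (hw : ∀ i, w i ≠ 0) (X Y : Matrix n n K) :
    diagConj w (X * Y) = diagConj w X * diagConj w Y := by
  have h : diagonal w * diagonal w⁻¹ = 1 := by
    rw [diagonal_mul_diagonal, ← diagonal_one]
    congr 1
    ext i
    simp [hw i]
  simp only [diagConj, Matrix.mul_assoc]
  rw [← Matrix.mul_assoc (diagonal w), h, Matrix.one_mul]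

lemma diagConj_pow (hw : ∀ i, w i ≠ 0) (X : Matrix n n K) (p : ℕ) :
    diagConj w (X ^ p) = diagConj w X ^ p := by
  induction p with
  | zero => simp [diagConj_one hw]
  | succ p ih => rw [pow_succ, diagConj_mul hw, ih, pow_succ]

lemma cocycle_diagConj_smul {X S : Type*} [CommMonoid S] [DistribMulAction S K]
    [IsScalarTower S K K] [SMulCommClass S K K] (hw : ∀ i, w i ≠ 0) (B : X → Matrix n n K)
    (R : X → X) (c : S) (p : ℕ) (x : X) :
    cocycle (fun x => diagConj w (c • B x)) R p x = diagConj w (c ^ p • cocycle B R p x) := by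
  induction p generalizing x with
  | zero => simp [diagConj_one hw]
  | succ p ih =>
    rw [cocycle_succ, ih, cocycle_succ, ← diagConj_mul hw, smul_mul_smul_comm, pow_succ']

end DiagConj

section FourierMatrix

variable {n E : Type*} [NormedAddCommGroup E] [InnerProductSpace ℝ E] (T : n → n → Finset E)

noncomputable def fourierMatrix (y : E) : Matrix n n ℂ :=
  of fun i j => ∑ x ∈ T i j, Complex.exp (2 * Real.pi * Complex.I * ((inner ℝ x y : ℝ) : ℂ))

lemma fourierMatrix_zero : fourierMatrix T 0 = of fun i j => ((T i j).card : ℂ) := by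
  ext i j
  simp [fourierMatrix]

lemma norm_fourierMatrix_apply_le (y : E) (i j : n) : ‖fourierMatrix T y i j‖ ≤ (T i j).card := by
  refine (norm_sum_le _ _).trans (le_of_eq ?_)
  have h : ∀ t : ℝ, ‖Complex.exp (2 * Real.pi * Complex.I * (t : ℂ))‖ = 1 := fun t => by
    rw [← Complex.norm_exp_ofReal_mul_I (2 * Real.pi * t)]
    push_cast
    ring_nf
  simp [h]

lemma norm_exp_two_pi_I_inner_sub_one_le (x y : E) :
    ‖Complex.exp (2 * Real.pi * Complex.I * ((inner ℝ x y : ℝ) : ℂ)) - 1‖ ≤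
      2 * Real.pi * ‖x‖ * ‖y‖ := by
  have h : 2 * Real.pi * Complex.I * ((inner ℝ x y : ℝ) : ℂ) =
      Complex.I * ((2 * Real.pi * inner ℝ x y : ℝ) : ℂ) := by
    push_cast
    ring
  rw [h]
  refine Real.norm_exp_I_mul_ofReal_sub_one_le.trans ?_
  rw [norm_mul, Real.norm_of_nonneg Real.two_pi_pos.le, mul_assoc (2 * Real.pi)]
  exact mul_le_mul_of_nonneg_left (norm_inner_le_norm x y) Real.two_pi_pos.le

lemma continuous_fourierMatrix : Continuous (fourierMatrix T) :=
  continuous_pi fun i => continuous_pi fun j => continuous_finsetSum _ fun x _ => by fun_prop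

end FourierMatrix

section LinftyOpNorm

attribute [local instance] Matrix.linftyOpSeminormedAddCommGroup Matrix.linftyOpNormedRing
  Matrix.linftyOpIsBoundedSMul Matrix.linftyOpNormedAlgebra

variable {m n α E : Type*} [Fintype m] [Fintype n] [NormedAddCommGroup E] [InnerProductSpace ℝ E]

namespace Matrix

lemma linfty_opNorm_le_of_forall_sum_le [SeminormedAddCommGroup α] {A : Matrix m n α} {r : ℝ}
    (hr : 0 ≤ r) (h : ∀ i, ∑ j, ‖A i j‖ ≤ r) : ‖A‖ ≤ r := by
  lift r to NNReal using hr
  rw [linfty_opNorm_def, NNReal.coe_le_coe, Finset.sup_le_iff]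
  intro i _
  rw [← NNReal.coe_le_coe]
  push_cast
  exact h i

lemma linfty_opNorm_le_sum [SeminormedAddCommGroup α] (A : Matrix m n α) :
    ‖A‖ ≤ ∑ i, ∑ j, ‖A i j‖ :=
  linfty_opNorm_le_of_forall_sum_le (by positivity) fun i =>
    Finset.single_le_sum (f := fun i => ∑ j, ‖A i j‖) (fun _ _ => by positivity)
      (Finset.mem_univ i)

end Matrix

variable [DecidableEq n]

namespace Matrix

lemma linfty_opNorm_le_one_of_norm_apply_le {α : Type*} [SeminormedAddCommGroup α]
    {X : Matrix n n α} {S : Matrix n n ℝ} (hS : S ∈ rowStochastic ℝ n)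
    (h : ∀ i j, ‖X i j‖ ≤ S i j) : ‖X‖ ≤ 1 :=
  linfty_opNorm_le_of_forall_sum_le zero_le_one fun i =>
    (Finset.sum_le_sum fun j _ => h i j).trans (sum_row_of_mem_rowStochastic hS i).le

lemma norm_mul_le_of_mem_rowStochastic [Nonempty n] {T : Matrix n n ℝ}
    (hT : T ∈ rowStochastic ℝ n) {δ : ℝ} (hδ : ∀ i j, δ ≤ T i j) {Z : Matrix n n ℝ}
    (hZ : Z * of (fun _ _ => 1) = 0) : ‖Z * T‖ ≤ (1 - Fintype.card n * δ) * ‖Z‖ := by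
  set E := T - δ • of fun _ _ => (1 : ℝ)
  have hrow : ∀ i, ∑ j, ‖E i j‖ = 1 - Fintype.card n * δ := fun i => by
    simp_rw [E, sub_apply, smul_apply, of_apply, smul_eq_mul, mul_one,
      Real.norm_of_nonneg (sub_nonneg.2 (hδ i _))]
    rw [Finset.sum_sub_distrib, sum_row_of_mem_rowStochastic hT, Finset.sum_const,
      Finset.card_univ, nsmul_eq_mul]
  have hr : 0 ≤ 1 - Fintype.card n * δ :=
    hrow (Classical.arbitrary n) ▸ Finset.sum_nonneg fun _ _ => norm_nonneg _
  have hZT : Z * T = Z * E := by rw [Matrix.mul_sub, Matrix.mul_smul, hZ, smul_zero, sub_zero]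
  rw [hZT, mul_comm _ ‖Z‖]
  exact (norm_mul_le _ _).trans (mul_le_mul_of_nonneg_left
    (linfty_opNorm_le_of_forall_sum_le hr fun i => (hrow i).le) (norm_nonneg Z))

lemma pow_succ_apply_pos_of_mem_rowStochastic {S : Matrix n n ℝ} (hS : S ∈ rowStochastic ℝ n)
    {k : ℕ} (hk : ∀ i j, 0 < (S ^ k) i j) (i j : n) : 0 < (S ^ (k + 1)) i j := by
  obtain ⟨l, hl⟩ : ∃ l, 0 < S i l := by
    by_contra! h
    linarith [sum_row_of_mem_rowStochastic hS i,
      Finset.sum_nonpos fun l (_ : l ∈ Finset.univ) => h l]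
  rw [pow_succ', mul_apply]
  exact Finset.sum_pos' (fun l _ => mul_nonneg (nonneg_of_mem_rowStochastic hS) (hk l j).le)
    ⟨l, Finset.mem_univ _, mul_pos hl (hk l j)⟩

theorem cauchySeq_pow_of_mem_rowStochastic [Nonempty n] {S : Matrix n n ℝ}
    (hS : S ∈ rowStochastic ℝ n) {k : ℕ} (hk : ∀ i j, 0 < (S ^ k) i j) :
    CauchySeq fun p => S ^ p := by
  obtain ⟨δ, hδ, hδle⟩ : ∃ δ > 0, ∀ i j, δ ≤ (S ^ (k + 1)) i j := by
    obtain ⟨ij, -, hij⟩ := Finset.exists_min_image Finset.univ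
      (fun ij : n × n => (S ^ (k + 1)) ij.1 ij.2) Finset.univ_nonempty
    exact ⟨_, pow_succ_apply_pos_of_mem_rowStochastic hS hk ij.1 ij.2,
      fun i j => hij (i, j) (Finset.mem_univ _)⟩
  have hSJ : S * of (fun _ _ => 1) = of fun _ _ => 1 := by
    ext i j
    simp [mul_apply, sum_row_of_mem_rowStochastic hS]
  have hcard : 0 < (Fintype.card n : ℝ) * δ := mul_pos (by exact_mod_cast Fintype.card_pos) hδ
  have hcard_le : (Fintype.card n : ℝ) * δ ≤ 1 := by
    have := Finset.card_nsmul_le_sum Finset.univ _ δ fun j _ => hδle (Classical.arbitrary n) j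
    rwa [sum_row_of_mem_rowStochastic (pow_mem hS _), nsmul_eq_mul, Finset.card_univ] at this
  exact cauchySeq_pow_of_norm_mul_pow_le hSJ
    (linfty_opNorm_le_one_of_norm_apply_le hS fun i j =>
      (Real.norm_of_nonneg (nonneg_of_mem_rowStochastic hS)).le)
    k.succ_pos (by linarith) (by linarith) fun Z hZ =>
      norm_mul_le_of_mem_rowStochastic (pow_mem hS _) hδle hZ

lemma cauchySeq_pow_map_ofReal {S : Matrix n n ℝ} (h : CauchySeq fun p => S ^ p) :
    CauchySeq fun p => S.map ((↑) : ℝ → ℂ) ^ p := by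
  have hmap : UniformContinuous fun X : Matrix n n ℝ => X.map ((↑) : ℝ → ℂ) :=
    uniformContinuous_pi.2 fun i => uniformContinuous_pi.2 fun j =>
      Complex.isometry_ofReal.uniformContinuous.comp
        ((Pi.uniformContinuous_proj _ j).comp (Pi.uniformContinuous_proj _ i))
  convert hmap.comp_cauchySeq h using 2 with p
  exact (S.map_pow Complex.ofRealHom p).symm

end Matrix

lemma diagConj_smul_mem_rowStochastic {M : Matrix n n ℝ} {v : n → ℝ} {lam : ℝ}
    (hM : ∀ i j, 0 ≤ M i j) (hv : ∀ i, 0 < v i) (hlam : 0 < lam) (hMv : M *ᵥ v = lam • v) :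
    diagConj v (lam⁻¹ • M) ∈ rowStochastic ℝ n := by
  rw [mem_rowStochastic_iff_sum]
  simp only [diagConj_apply, Matrix.smul_apply, smul_eq_mul]
  refine ⟨fun i j => by have := hv i; have := hv j; have := hM i j; positivity, fun i => ?_⟩
  have hrow : ∑ j, M i j * v j = lam * v i := by
    simpa [mulVec, dotProduct] using congrFun hMv i
  calc ∑ j, (v i)⁻¹ * (lam⁻¹ * M i j) * v j = (v i)⁻¹ * lam⁻¹ * ∑ j, M i j * v j := by
        rw [Finset.mul_sum]
        exact Finset.sum_congr rfl fun j _ => by ring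
    _ = 1 := by
        rw [hrow]
        field_simp [(hv i).ne', hlam.ne']

lemma norm_fourierMatrix_sub_le (T : n → n → Finset E) (y : E) :
    ‖fourierMatrix T y - fourierMatrix T 0‖ ≤
      (2 * Real.pi * ∑ i, ∑ j, ∑ x ∈ T i j, ‖x‖) * ‖y‖ := by
  refine (linfty_opNorm_le_sum _).trans ?_
  calc _ ≤ ∑ i, ∑ j, ∑ x ∈ T i j, 2 * Real.pi * ‖x‖ * ‖y‖ := by
        gcongr with i _ j _
        rw [Matrix.sub_apply, fourierMatrix, fourierMatrix, of_apply, of_apply,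
          ← Finset.sum_sub_distrib]
        refine (norm_sum_le _ _).trans (Finset.sum_le_sum fun x _ => ?_)
        simpa using norm_exp_two_pi_I_inner_sub_one_le x y
    _ = _ := by simp only [Finset.mul_sum, Finset.sum_mul]

lemma norm_diagConj_smul_fourierMatrix_apply_le (T : n → n → Finset E) {M : Matrix n n ℝ}
    (hM : ∀ i j, M i j = (T i j).card) {v : n → ℝ} (hv : ∀ i, 0 < v i) {lam : ℝ} (hlam : 0 < lam)
    (y : E) (i j : n) :
    ‖diagConj (fun i => (v i : ℂ)) (lam⁻¹ • fourierMatrix T y) i j‖ ≤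
      diagConj v (lam⁻¹ • M) i j := by
  have := norm_fourierMatrix_apply_le T y i j
  simp only [diagConj_apply, Matrix.smul_apply, hM, norm_mul, norm_inv, norm_smul,
    Complex.norm_real, Real.norm_of_nonneg (hv i).le, Real.norm_of_nonneg (hv j).le,
    Real.norm_of_nonneg hlam.le, smul_eq_mul]
  have := hv i; have := hv j
  gcongr

lemma exists_norm_diagConj_smul_fourierMatrix_sub_le (T : n → n → Finset E) (w : n → ℂ)
    (a : ℝ) : ∃ c, 0 ≤ c ∧ ∀ y,
      ‖diagConj w (a • fourierMatrix T y) - diagConj w (a • fourierMatrix T 0)‖ ≤ c * ‖y‖ := by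
  set L := 2 * Real.pi * ∑ i, ∑ j, ∑ x ∈ T i j, ‖x‖
  refine ⟨‖diagonal w⁻¹‖ * (‖a‖ * L) * ‖diagonal w‖, by positivity, fun y => ?_⟩
  rw [← diagConj_sub, ← smul_sub, diagConj]
  calc _ ≤ ‖diagonal w⁻¹‖ * ‖a • (fourierMatrix T y - fourierMatrix T 0)‖ * ‖diagonal w‖ :=
        (norm_mul_le _ _).trans (mul_le_mul_of_nonneg_right (norm_mul_le _ _) (norm_nonneg _))
    _ ≤ ‖diagonal w⁻¹‖ * (‖a‖ * (L * ‖y‖)) * ‖diagonal w‖ := by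
        gcongr
        exact (norm_smul_le _ _).trans
          (mul_le_mul_of_nonneg_left (norm_fourierMatrix_sub_le T y) (norm_nonneg a))
    _ = _ := by ring

theorem exists_tendstoUniformlyOn_cocycle_fourierMatrix [Nonempty n] (T : n → n → Finset E)
    {M : Matrix n n ℝ} (hM : ∀ i j, M i j = (T i j).card) {k : ℕ} (hk : ∀ i j, 0 < (M ^ k) i j)
    {v : n → ℝ} (hv : ∀ i, 0 < v i) {lam : ℝ} (hlam : 0 < lam) (hMv : M *ᵥ v = lam • v)
    (R : E →L[ℝ] E) (hR : ‖R‖ < 1) :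
    ∃ C : E → Matrix n n ℂ, (∀ i j, Continuous fun y => C y i j) ∧
      ∀ s, IsBounded s → ∀ i j, TendstoUniformlyOn
        (fun p y => cocycle (fun y => diagConj (fun i => (v i : ℂ)) (lam⁻¹ • fourierMatrix T y))
          R p y i j) (fun y => C y i j) atTop s := by
  set A := fun y => diagConj (fun i => (v i : ℂ)) (lam⁻¹ • fourierMatrix T y)
  set S := diagConj v (lam⁻¹ • M)
  have hS : S ∈ rowStochastic ℝ n :=
    diagConj_smul_mem_rowStochastic (fun i j => hM i j ▸ Nat.cast_nonneg _) hv hlam hMv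
  have hSk : ∀ i j, 0 < (S ^ k) i j := fun i j => by
    rw [← diagConj_pow (fun i => (hv i).ne'), smul_pow, diagConj_apply, Matrix.smul_apply,
      smul_eq_mul]
    have := hk i j; have := hv i; have := hv j
    positivity
  have hA0 : A 0 = S.map (↑) := by
    ext i j
    simp [A, S, fourierMatrix_zero, hM]
  have hAcont : Continuous A := continuous_pi fun i => continuous_pi fun j => by
    simp only [A, diagConj_apply, Matrix.smul_apply]
    exact (continuous_const.mul (((continuous_apply j).comp ((continuous_apply i).comp
      (continuous_fourierMatrix T))).const_smul lam⁻¹)).mul continuous_const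
  obtain ⟨c, hc, hAc⟩ :=
    exists_norm_diagConj_smul_fourierMatrix_sub_le T (fun i => (v i : ℂ)) lam⁻¹
  have hA1 : ∀ y, ‖A y‖ ≤ 1 := fun y => linfty_opNorm_le_one_of_norm_apply_le hS
    (norm_diagConj_smul_fourierMatrix_apply_le T hM hv hlam y)
  -- Instance search only finds completeness for the product uniformity, not the `ℓ∞` one.
  have := FiniteDimensional.complete ℂ (Matrix n n ℂ)
  obtain ⟨C, hC⟩ := exists_tendstoUniformlyOn_cocycle hA1 hc hAc R.le_opNorm (norm_nonneg R)
    hR (hA0 ▸ cauchySeq_pow_map_ofReal (cauchySeq_pow_of_mem_rowStochastic hS hSk))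
  have hCcont :=
    continuous_of_forall_isBounded_tendstoUniformlyOn (continuous_cocycle hAcont R.continuous) hC
  have hentry : ∀ i j, UniformContinuous fun X : Matrix n n ℂ => X i j := fun i j =>
    (Pi.uniformContinuous_proj _ j).comp (Pi.uniformContinuous_proj _ i)
  exact ⟨C, fun i j => (hentry i j).continuous.comp hCcont,
    fun s hs i j => (hentry i j).comp_tendstoUniformlyOn (hC s hs)⟩

end LinftyOpNorm

theorem stmt9_general
    {N m : ℕ} (hN : 1 ≤ N)
    (T : Fin N → Fin N → Finset (EuclideanSpace ℝ (Fin m)))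
    (M : Matrix (Fin N) (Fin N) ℝ)
    (hM : ∀ i j, M i j = (T i j).card)
    (hprim : ∃ k : ℕ, ∀ i j, 0 < (M ^ k) i j)
    (lam : ℝ) (hlam : 1 < lam)
    (hlamPF : ∃ v : Fin N → ℝ, (∀ i, 0 < v i) ∧ M.mulVec v = lam • v)
    (B : EuclideanSpace ℝ (Fin m) → Matrix (Fin N) (Fin N) ℂ)
    (hB : ∀ y i j, B y i j =
      ∑ x ∈ T i j, Complex.exp (2 * Real.pi * Complex.I * ((inner ℝ x y : ℝ) : ℂ)))
    (R : EuclideanSpace ℝ (Fin m) →L[ℝ] EuclideanSpace ℝ (Fin m))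
    (hRcontr : ‖R‖ < 1)
    (Bc : ℕ → EuclideanSpace ℝ (Fin m) → Matrix (Fin N) (Fin N) ℂ)
    (hBc0 : ∀ y, Bc 0 y = 1)
    (hBcS : ∀ n y, Bc (n + 1) y = B y * Bc n (R y)) :
    ∃ C : EuclideanSpace ℝ (Fin m) → Matrix (Fin N) (Fin N) ℂ,
      (∀ y i j, Tendsto (fun n : ℕ => (lam ^ n)⁻¹ • Bc n y i j)
        atTop (𝓝 (C y i j))) ∧
      (∀ i j, Continuous fun y => C y i j) ∧
      (∀ K : Set (EuclideanSpace ℝ (Fin m)), IsCompact K → ∀ i j,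
        TendstoUniformlyOn (fun (n : ℕ) y => (lam ^ n)⁻¹ • Bc n y i j)
          (fun y => C y i j) atTop K) := by
  have : Nonempty (Fin N) := ⟨⟨0, hN⟩⟩
  obtain ⟨k, hk⟩ := hprim
  obtain ⟨v, hv, hMv⟩ := hlamPF
  obtain ⟨C, hCcont, hC⟩ := exists_tendstoUniformlyOn_cocycle_fourierMatrix T hM hk hv
    (zero_lt_one.trans hlam) hMv R hRcontr
  set w : Fin N → ℂ := fun i => (v i : ℂ)
  have hw : ∀ i, w i ≠ 0 := fun i => Complex.ofReal_ne_zero.2 (hv i).ne'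
  have hBc : Bc = cocycle (fourierMatrix T) R := by
    rw [show B = fourierMatrix T from funext fun y => Matrix.ext (hB y)] at hBcS
    exact eq_cocycle hBc0 hBcS
  have hscaled : ∀ n y i j, (lam ^ n)⁻¹ • Bc n y i j =
      w i / w j * cocycle (fun y => diagConj w (lam⁻¹ • fourierMatrix T y)) R n y i j := by
    intro n y i j
    rw [cocycle_diagConj_smul hw, diagConj_apply, Matrix.smul_apply, hBc, inv_pow]
    field_simp [hw i, hw j]
  refine ⟨fun y => of fun i j => w i / w j * C y i j, fun y i j => ?_,
    fun i j => continuous_const.mul (hCcont i j), fun K hK i j => ?_⟩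
  · simp_rw [hscaled]
    exact ((hC {y} isBounded_singleton i j).tendsto_at rfl).const_mul _
  · simp_rw [hscaled]
    exact (uniformContinuous_const_smul (w i / w j)).comp_tendstoUniformlyOn
      (hC K hK.isBounded i j)

/-- the scaled internal cocycle `(λ⁻ⁿ B⁽ⁿ⁾(y))ₙ` converges compactly
(uniformly on every compact subset of `ℝ^m`), so the limit matrix function
`C(y) = lim λ⁻ⁿ B⁽ⁿ⁾(y)` is well defined and continuous. -/
theorem stmt9
    {N m : ℕ} (hN : 1 ≤ N) (hm : 1 ≤ m)
    (T : Fin N → Fin N → Finset (EuclideanSpace ℝ (Fin m)))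
    (M : Matrix (Fin N) (Fin N) ℝ)
    (hM : ∀ i j, M i j = (T i j).card)
    (hprim : ∃ k : ℕ, ∀ i j, 0 < (M ^ k) i j)
    (lam : ℝ) (hlam : 1 < lam)
    (hlamPF : ∃ v : Fin N → ℝ, (∀ i, 0 < v i) ∧ M.mulVec v = lam • v)
    (B : EuclideanSpace ℝ (Fin m) → Matrix (Fin N) (Fin N) ℂ)
    (hB : ∀ y i j, B y i j =
      ∑ x ∈ T i j, Complex.exp (2 * Real.pi * Complex.I * ((inner ℝ x y : ℝ) : ℂ)))
    (R : EuclideanSpace ℝ (Fin m) →L[ℝ] EuclideanSpace ℝ (Fin m))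
    (hRnormal : R.comp (ContinuousLinearMap.adjoint R) =
      (ContinuousLinearMap.adjoint R).comp R)
    (hRcontr : ‖R‖ < 1)
    (Bc : ℕ → EuclideanSpace ℝ (Fin m) → Matrix (Fin N) (Fin N) ℂ)
    (hBc0 : ∀ y, Bc 0 y = 1)
    (hBcS : ∀ n y, Bc (n + 1) y = B y * Bc n (R y)) :
    ∃ C : EuclideanSpace ℝ (Fin m) → Matrix (Fin N) (Fin N) ℂ,
      (∀ y i j, Tendsto (fun n : ℕ => (lam ^ n)⁻¹ • Bc n y i j)
        atTop (𝓝 (C y i j))) ∧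
      (∀ i j, Continuous fun y => C y i j) ∧
      (∀ K : Set (EuclideanSpace ℝ (Fin m)), IsCompact K → ∀ i j,
        TendstoUniformlyOn (fun (n : ℕ) y => (lam ^ n)⁻¹ • Bc n y i j)
          (fun y => C y i j) atTop K) :=
  stmt9_general hN T M hM hprim lam hlam hlamPF B hB R hRcontr Bc hBc0 hBcS
end

section
/- The quadruple of compact intervals W_A = [τ−2, τ−1], W_B = [−1, τ−2], W_C = [τ−2, 2τ−3], W_D = [2τ−3, τ−1] is the unique quadruple (W_A, W_B, W_C, W_D) of nonempty compact subsets of ℝ satisfying the system W_A = σ·W_A ∪ (σ·W_C + σ²), W_B = σ·W_A + σ, W_C = σ·W_C ∪ σ·W_D, W_D = σ·W_B. Moreover, the covering function m_c = 1_{W_A} + 1_{W_B} + 1_{W_C} + 1_{W_D} is not almost-everywhere constant on the total window [−1, τ−1]: it equals 1 Lebesgue-almost everywhere on [−1, τ−2] and equals 2 Lebesgue-almost everywhere on [τ−2, τ−1]. -/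
/-!
Every map of the window system is an affine contraction with ratio `|σ| = τ⁻¹ < 1`, so the
system contracts the maximum of the four Hausdorff distances between two solutions: nonempty
compact solutions are unique. With `σ = 1 - τ` and `τ² = τ + 1` the four intervals are checked to
be a solution by endpoint arithmetic. The covering function then counts the intervals through a
point: `[-1, τ - 2]` is covered by `W_B` alone, while `[τ - 2, τ - 1]` is covered by `W_A` and
once more by `W_C ∪ W_D`, which meet only at `2τ - 3`.
-/

open Set MeasureTheory Metric TopologicalSpace Real
open scoped NNReal goldenRatio

section Interval

variable {K : Type*} [Field K] [LinearOrder K] [IsStrictOrderedRing K] {c : K}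

theorem image_affine_Icc_of_neg (hc : c < 0) (d a b : K) :
    (fun s => c * s + d) '' Icc a b = Icc (c * b + d) (c * a + d) := by
  ext y
  constructor
  · rintro ⟨x, ⟨hax, hxb⟩, rfl⟩
    constructor <;> nlinarith
  · rintro ⟨hby, hya⟩
    refine ⟨(y - d) / c, ⟨?_, ?_⟩, by simp [mul_div_cancel₀ _ hc.ne]⟩
    · rw [le_div_iff_of_neg hc]; linarith
    · rw [div_le_iff_of_neg hc]; linarith

theorem image_const_mul_Icc_of_neg (hc : c < 0) (a b : K) :
    (fun s => c * s) '' Icc a b = Icc (c * b) (c * a) := by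
  simpa using image_affine_Icc_of_neg hc 0 a b

end Interval

namespace LipschitzWith

variable {α β : Type*} [PseudoEMetricSpace α] [PseudoEMetricSpace β] {K : ℝ≥0} {f : α → β}

theorem infEDist_image_le (hf : LipschitzWith K f) (hK : K ≠ 0) (x : α) (t : Set α) :
    infEDist (f x) (f '' t) ≤ K * infEDist x t := by
  simp only [infEDist, ENNReal.mul_iInf_of_ne (ENNReal.coe_ne_zero.2 hK) ENNReal.coe_ne_top]
  exact le_iInf₂ fun y hy => (iInf₂_le (f y) (mem_image_of_mem f hy)).trans (hf.edist_le_mul x y)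

theorem hausdorffEDist_image_le (hf : LipschitzWith K f) (hK : K ≠ 0) (s t : Set α) :
    hausdorffEDist (f '' s) (f '' t) ≤ K * hausdorffEDist s t := by
  refine hausdorffEDist_le_of_infEDist ?_ ?_ <;> rintro _ ⟨x, hx, rfl⟩
  · exact (hf.infEDist_image_le hK x t).trans
      (mul_le_mul_right (infEDist_le_hausdorffEDist_of_mem hx) _)
  · exact (hf.infEDist_image_le hK x s).trans
      (mul_le_mul_right (hausdorffEDist_comm (s := s) ▸ infEDist_le_hausdorffEDist_of_mem hx) _)

end LipschitzWith

theorem lipschitzWith_const_mul_add_const {R : Type*} [SeminormedRing R] (a b : R) :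
    LipschitzWith ‖a‖₊ (fun x => a * x + b) :=
  LipschitzWith.of_dist_le_mul fun x y => by
    simpa [dist_eq_norm, ← mul_sub] using norm_mul_le a (x - y)

theorem ENNReal.eq_zero_of_le_mul_of_lt_one {a K : ENNReal} (h : a ≤ K * a) (hK : K < 1)
    (ha : a ≠ ⊤) : a = 0 := by
  by_contra h0
  exact (ENNReal.mul_lt_mul_left h0 ha hK).not_ge (by rwa [one_mul])

def IsWindowSolution (σ : ℝ) (A B C D : Set ℝ) : Prop :=
  A = (fun s => σ * s) '' A ∪ (fun s => σ * s + σ ^ 2) '' C ∧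
  B = (fun s => σ * s + σ) '' A ∧
  C = (fun s => σ * s) '' C ∪ (fun s => σ * s) '' D ∧
  D = (fun s => σ * s) '' B

theorem IsWindowSolution.unique {σ : ℝ} (hσ0 : σ ≠ 0) (hσ1 : |σ| < 1)
    {A B C D A' B' C' D' : NonemptyCompacts ℝ}
    (h : IsWindowSolution σ A B C D) (h' : IsWindowSolution σ A' B' C' D') :
    A = A' ∧ B = B' ∧ C = C' ∧ D = D' := by
  obtain ⟨hA, hB, hC, hD⟩ := h
  obtain ⟨hA', hB', hC', hD'⟩ := h'
  set d := max (max (edist A A') (edist B B')) (max (edist C C') (edist D D')) with hd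
  have hAd : edist A A' ≤ d := (le_max_left _ _).trans (le_max_left _ _)
  have hBd : edist B B' ≤ d := (le_max_right _ _).trans (le_max_left _ _)
  have hCd : edist C C' ≤ d := (le_max_left _ _).trans (le_max_right _ _)
  have hDd : edist D D' ≤ d := (le_max_right _ _).trans (le_max_right _ _)
  have image_le : ∀ {f : ℝ → ℝ} {X Y : NonemptyCompacts ℝ}, LipschitzWith ‖σ‖₊ f →
      edist X Y ≤ d → hausdorffEDist (f '' X) (f '' Y) ≤ ‖σ‖₊ * d := fun hf hXY =>
    (hf.hausdorffEDist_image_le (nnnorm_ne_zero_iff.2 hσ0) _ _).trans (mul_le_mul_right hXY _)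
  have hlin : LipschitzWith ‖σ‖₊ (fun s : ℝ => σ * s) := lipschitzWith_smul σ
  have hcontr : d ≤ ‖σ‖₊ * d := by
    refine max_le (max_le ?_ ?_) (max_le ?_ ?_)
    · change hausdorffEDist (A : Set ℝ) A' ≤ _
      rw [hA, hA']
      exact hausdorffEDist_union_le.trans
        (max_le (image_le hlin hAd) (image_le (lipschitzWith_const_mul_add_const σ _) hCd))
    · change hausdorffEDist (B : Set ℝ) B' ≤ _
      rw [hB, hB']
      exact image_le (lipschitzWith_const_mul_add_const σ _) hAd
    · change hausdorffEDist (C : Set ℝ) C' ≤ _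
      rw [hC, hC']
      exact hausdorffEDist_union_le.trans (max_le (image_le hlin hCd) (image_le hlin hDd))
    · change hausdorffEDist (D : Set ℝ) D' ≤ _
      rw [hD, hD']
      exact image_le hlin hBd
  have hσK : (‖σ‖₊ : ENNReal) < 1 := by exact_mod_cast hσ1
  have hd0 := ENNReal.eq_zero_of_le_mul_of_lt_one hcontr hσK (by simp [hd, edist_ne_top])
  have eq_of_le : ∀ {X Y : NonemptyCompacts ℝ}, edist X Y ≤ d → X = Y := fun hXY =>
    edist_eq_zero.1 (nonpos_iff_eq_zero.1 (hd0 ▸ hXY))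
  exact ⟨eq_of_le hAd, eq_of_le hBd, eq_of_le hCd, eq_of_le hDd⟩

theorem three_halves_lt_goldenRatio : 3 / 2 < φ := by
  nlinarith [goldenRatio_sq, goldenRatio_pos]

theorem isWindowSolution_goldenIntervals :
    IsWindowSolution (1 - φ) (Icc (φ - 2) (φ - 1)) (Icc (-1) (φ - 2))
      (Icc (φ - 2) (2 * φ - 3)) (Icc (2 * φ - 3) (φ - 1)) := by
  have e1 : (1 - φ) * (φ - 1) = φ - 2 := by linear_combination -goldenRatio_sq
  have e2 : (1 - φ) * (φ - 2) = 2 * φ - 3 := by linear_combination -goldenRatio_sq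
  have e3 : (1 - φ) * (2 * φ - 3) = 3 * φ - 5 := by linear_combination -2 * goldenRatio_sq
  have e4 : (1 - φ) * (-1) = φ - 1 := by ring
  have e5 : (1 - φ) ^ 2 = 2 - φ := by linear_combination goldenRatio_sq
  have h1 := three_halves_lt_goldenRatio
  have h2 := goldenRatio_lt_two
  have hσ : 1 - φ < 0 := by linarith
  refine ⟨?_, ?_, ?_, ?_⟩ <;>
    simp only [image_const_mul_Icc_of_neg hσ, image_affine_Icc_of_neg hσ, e1, e2, e3, e4, e5]
  · rw [show 3 * φ - 5 + (2 - φ) = 2 * φ - 3 by ring, show 2 * φ - 3 + (2 - φ) = φ - 1 by ring,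
      Icc_union_Icc_eq_Icc (by linarith) (by linarith)]
  · congr 1 <;> ring
  · rw [union_comm, Icc_union_Icc_eq_Icc (by linarith) (by linarith)]

section AlmostEverywhere

variable {α β : Type*} [MeasurableSpace α] {μ : Measure α}

theorem ae_restrict_Icc_of_forall_Ioo [TopologicalSpace α] [LinearOrder α]
    [OrderClosedTopology α] [OpensMeasurableSpace α] [NullSingletonClass μ] {p : α → Prop} {a b : α}
    (h : ∀ x ∈ Ioo a b, p x) : ∀ᵐ x ∂μ.restrict (Icc a b), p x :=
  (ae_restrict_congr_set Ioo_ae_eq_Icc).1 (ae_restrict_of_forall_mem measurableSet_Ioo h)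

theorem not_exists_ae_restrict_eq_const {f : α → β} {s t u : Set α} {a b : β}
    (hs : s ⊆ u) (ht : t ⊆ u) (hμs : μ s ≠ 0) (hμt : μ t ≠ 0)
    (hfs : ∀ᵐ x ∂μ.restrict s, f x = a) (hft : ∀ᵐ x ∂μ.restrict t, f x = b) (hab : a ≠ b) :
    ¬ ∃ c, ∀ᵐ x ∂μ.restrict u, f x = c := by
  rintro ⟨c, hc⟩
  have eq_c : ∀ {v : Set α} {e : β}, v ⊆ u → μ v ≠ 0 → (∀ᵐ x ∂μ.restrict v, f x = e) → e = c :=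
    fun hv hμv hfv =>
      haveI := ae_restrict_neBot.2 hμv
      let ⟨_, hx, hx'⟩ := (hfv.and (ae_restrict_of_ae_restrict_of_subset hv hc)).exists
      hx ▸ hx'
  exact hab ((eq_c hs hμs hfs).trans (eq_c ht hμt hft).symm)

end AlmostEverywhere

noncomputable def goldenCovering (y : ℝ) : ℝ :=
  indicator (Icc (φ - 2) (φ - 1)) (fun _ => (1 : ℝ)) y +
  indicator (Icc (-1) (φ - 2)) (fun _ => (1 : ℝ)) y +
  indicator (Icc (φ - 2) (2 * φ - 3)) (fun _ => (1 : ℝ)) y +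
  indicator (Icc (2 * φ - 3) (φ - 1)) (fun _ => (1 : ℝ)) y

theorem goldenCovering_eq_one {y : ℝ} (hy : y ∈ Ioo (-1) (φ - 2)) : goldenCovering y = 1 := by
  have h1 := one_lt_goldenRatio
  rw [goldenCovering, indicator_of_notMem (notMem_Icc_of_lt hy.2),
    indicator_of_mem (Ioo_subset_Icc_self hy), indicator_of_notMem (notMem_Icc_of_lt hy.2),
    indicator_of_notMem (notMem_Icc_of_lt (show y < 2 * φ - 3 by linarith [hy.2]))]
  norm_num

theorem ae_goldenCovering_eq_one :
    ∀ᵐ y ∂volume.restrict (Icc (-1) (φ - 2)), goldenCovering y = 1 :=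
  ae_restrict_Icc_of_forall_Ioo fun _ => goldenCovering_eq_one

theorem goldenCovering_eq_two_of_mem_Ioo_left {y : ℝ} (hy : y ∈ Ioo (φ - 2) (2 * φ - 3)) :
    goldenCovering y = 2 := by
  have h2 := goldenRatio_lt_two
  rw [goldenCovering,
    indicator_of_mem (show y ∈ Icc (φ - 2) (φ - 1) from ⟨hy.1.le, by linarith [hy.2]⟩),
    indicator_of_notMem (notMem_Icc_of_gt hy.1), indicator_of_mem (Ioo_subset_Icc_self hy),
    indicator_of_notMem (notMem_Icc_of_lt hy.2)]
  norm_num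

theorem goldenCovering_eq_two_of_mem_Ioo_right {y : ℝ} (hy : y ∈ Ioo (2 * φ - 3) (φ - 1)) :
    goldenCovering y = 2 := by
  have h1 := one_lt_goldenRatio
  rw [goldenCovering,
    indicator_of_mem (show y ∈ Icc (φ - 2) (φ - 1) from ⟨by linarith [hy.1], hy.2.le⟩),
    indicator_of_notMem (notMem_Icc_of_gt (show φ - 2 < y by linarith [hy.1])),
    indicator_of_notMem (notMem_Icc_of_gt hy.1), indicator_of_mem (Ioo_subset_Icc_self hy)]
  norm_num

theorem ae_goldenCovering_eq_two :
    ∀ᵐ y ∂volume.restrict (Icc (φ - 2) (φ - 1)), goldenCovering y = 2 := by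
  have h1 := one_lt_goldenRatio
  have h2 := goldenRatio_lt_two
  rw [← Icc_union_Icc_eq_Icc (b := 2 * φ - 3) (by linarith) (by linarith), ae_restrict_union_iff]
  exact ⟨ae_restrict_Icc_of_forall_Ioo fun _ => goldenCovering_eq_two_of_mem_Ioo_left,
    ae_restrict_Icc_of_forall_Ioo fun _ => goldenCovering_eq_two_of_mem_Ioo_right⟩

/-- the quadruple `W_A=[τ−2,τ−1]`, `W_B=[−1,τ−2]`, `W_C=[τ−2,2τ−3]`,
`W_D=[2τ−3,τ−1]` is the unique compact nonempty solution of the window IFS of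
`ρ' = (AB, D, CA, C)`; the covering function `m_c = 1_{W_A}+1_{W_B}+1_{W_C}+1_{W_D}`
equals `1` a.e. on `[−1,τ−2]`, equals `2` a.e. on `[τ−2,τ−1]`, and hence is not
a.e. constant on the total window `[−1,τ−1]`. -/
theorem stmt15
    (τ σ : ℝ) (hτ : τ = (1 + Real.sqrt 5) / 2) (hσ : σ = 1 - τ)
    (mc : ℝ → ℝ)
    (hmc : ∀ y, mc y =
      indicator (Icc (τ - 2) (τ - 1)) (fun _ => (1 : ℝ)) y +
      indicator (Icc (-1) (τ - 2)) (fun _ => (1 : ℝ)) y +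
      indicator (Icc (τ - 2) (2 * τ - 3)) (fun _ => (1 : ℝ)) y +
      indicator (Icc (2 * τ - 3) (τ - 1)) (fun _ => (1 : ℝ)) y) :
    (Icc (τ - 2) (τ - 1) =
        (fun s => σ * s) '' Icc (τ - 2) (τ - 1) ∪
          (fun s => σ * s + σ ^ 2) '' Icc (τ - 2) (2 * τ - 3) ∧
      Icc (-1) (τ - 2) = (fun s => σ * s + σ) '' Icc (τ - 2) (τ - 1) ∧
      Icc (τ - 2) (2 * τ - 3) =
        (fun s => σ * s) '' Icc (τ - 2) (2 * τ - 3) ∪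
          (fun s => σ * s) '' Icc (2 * τ - 3) (τ - 1) ∧
      Icc (2 * τ - 3) (τ - 1) = (fun s => σ * s) '' Icc (-1) (τ - 2)) ∧
    (∀ WA WB WC WD : Set ℝ,
      WA.Nonempty → IsCompact WA → WB.Nonempty → IsCompact WB →
      WC.Nonempty → IsCompact WC → WD.Nonempty → IsCompact WD →
      WA = (fun s => σ * s) '' WA ∪ (fun s => σ * s + σ ^ 2) '' WC →
      WB = (fun s => σ * s + σ) '' WA →
      WC = (fun s => σ * s) '' WC ∪ (fun s => σ * s) '' WD →
      WD = (fun s => σ * s) '' WB →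
      WA = Icc (τ - 2) (τ - 1) ∧ WB = Icc (-1) (τ - 2) ∧
        WC = Icc (τ - 2) (2 * τ - 3) ∧ WD = Icc (2 * τ - 3) (τ - 1)) ∧
    (∀ᵐ y ∂(volume.restrict (Icc (-1) (τ - 2))), mc y = 1) ∧
    (∀ᵐ y ∂(volume.restrict (Icc (τ - 2) (τ - 1))), mc y = 2) ∧
    ¬ ∃ c : ℝ, ∀ᵐ y ∂(volume.restrict (Icc (-1) (τ - 1))), mc y = c := by
  obtain rfl : τ = φ := hτ
  subst hσ
  obtain rfl : mc = goldenCovering := funext hmc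
  have h1 := one_lt_goldenRatio
  have h2 := goldenRatio_lt_two
  have volume_Icc_ne_zero : ∀ {a b : ℝ}, a < b → volume (Icc a b) ≠ 0 := fun hab => by
    rw [Real.volume_Icc, ne_eq, ENNReal.ofReal_eq_zero, not_le]; linarith
  refine ⟨isWindowSolution_goldenIntervals, ?_, ae_goldenCovering_eq_one, ae_goldenCovering_eq_two,
    not_exists_ae_restrict_eq_const (Icc_subset_Icc_right (by linarith))
      (Icc_subset_Icc_left (by linarith)) (volume_Icc_ne_zero (by linarith))
      (volume_Icc_ne_zero (by linarith))
      ae_goldenCovering_eq_one ae_goldenCovering_eq_two (by norm_num)⟩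
  intro WA WB WC WD hA cA hB cB hC cC hD cD eA eB eC eD
  have := IsWindowSolution.unique (A := ⟨⟨WA, cA⟩, hA⟩) (B := ⟨⟨WB, cB⟩, hB⟩)
    (C := ⟨⟨WC, cC⟩, hC⟩) (D := ⟨⟨WD, cD⟩, hD⟩)
    (A' := ⟨⟨_, isCompact_Icc⟩, nonempty_Icc.2 (by linarith)⟩)
    (B' := ⟨⟨_, isCompact_Icc⟩, nonempty_Icc.2 (by linarith)⟩)
    (C' := ⟨⟨_, isCompact_Icc⟩, nonempty_Icc.2 (by linarith)⟩)
    (D' := ⟨⟨_, isCompact_Icc⟩, nonempty_Icc.2 (by linarith)⟩)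
    (by linarith) (abs_sub_lt_iff.2 ⟨by linarith, by linarith⟩) ⟨eA, eB, eC, eD⟩
    isWindowSolution_goldenIntervals
  simpa [NonemptyCompacts.ext_iff] using this
end
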